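/- arXiv:1406.2389 — 2 statements merged into one kernel-verified Lean document; each statement's English description precedes it below -/
import Mathlib

section
/- For η a complex number of modulus 1 and α = (√5·η − 1)/(√5 − η), the 4×4 matrix U = (1/4)·[[−1, √5, √5, √5], [√5, −√5·α, η·α, √5·η], [√5, 1, √5·η, −√5·η], [√5, √5·α, −√5·α, 1]] is unitary, i.e., U·U* = I. -/
/-!
Write `s = √5`. The identity `U * Uᴴ = 1` is a polynomial identity in `s, η, α` and their
conjugates modulo four relations: `s` is real with `s ^ 2 = 5`, `|η| = 1`, `|α| = 1`, and
`α * (s - η) = s * η - 1`. The only one that is not immediate is `|α| = 1`: for real `r` and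
`|η| = 1` we have `r * η - 1 = η * conj (r - η)`, so `z ↦ (r * z - 1) / (r - z)` maps the unit
circle to itself.
-/

open Complex ComplexConjugate

/-- Four times the matrix `U` of the statement, with `s` in place of `√5`. -/
def etaMatrix {K : Type*} [Ring K] (s η α : K) : Matrix (Fin 4) (Fin 4) K :=
  !![-1, s, s, s;
      s, -s * α, η * α, s * η;
      s, 1, s * η, -s * η;
      s, s * α, -s * α, 1]

theorem etaMatrix_mul_conjTranspose {K : Type*} [CommRing K] [StarRing K] {s η α : K}
    (hs : star s = s) (hs5 : s ^ 2 = 5) (hη : η * star η = 1) (hα : α * star α = 1)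
    (hαs : α * (s - η) = s * η - 1) :
    etaMatrix s η α * (etaMatrix s η α).conjTranspose = 16 := by
  ext i j
  fin_cases i <;> fin_cases j <;>
    simp only [etaMatrix, Matrix.mul_apply, Matrix.conjTranspose_apply, Matrix.of_apply,
      Matrix.cons_val, Matrix.cons_val_zero, Matrix.cons_val_one, Fin.sum_univ_four,
      Matrix.ofNat_apply, star_mul', star_neg, star_one, hs, Fin.isValue, Fin.reduceEq,
      Fin.reduceFinMk, Fin.zero_eta, Fin.mk_one, ↓reduceIte] <;>
    grind

theorem norm_ofReal_mul_sub_one_eq_norm_ofReal_sub {η : ℂ} (hη : ‖η‖ = 1) (r : ℝ) :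
    ‖(r : ℂ) * η - 1‖ = ‖(r : ℂ) - η‖ := by
  have hη' : η * conj η = 1 := by rw [mul_conj', hη]; norm_num
  calc ‖(r : ℂ) * η - 1‖ = ‖η * conj ((r : ℂ) - η)‖ := by
        rw [map_sub, conj_ofReal]; congr 1; linear_combination hη'
    _ = ‖(r : ℂ) - η‖ := by rw [norm_mul, hη, one_mul, norm_conj]

theorem ofReal_sub_ne_zero_of_norm_eq_one {η : ℂ} (hη : ‖η‖ = 1) {r : ℝ} (hr : |r| ≠ 1) :
    (r : ℂ) - η ≠ 0 := by
  rw [sub_ne_zero]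
  rintro rfl
  exact hr (by simpa using hη)

theorem norm_ofReal_mul_sub_one_div_ofReal_sub {η : ℂ} (hη : ‖η‖ = 1) {r : ℝ} (hr : |r| ≠ 1) :
    ‖((r : ℂ) * η - 1) / ((r : ℂ) - η)‖ = 1 := by
  rw [norm_div, norm_ofReal_mul_sub_one_eq_norm_ofReal_sub hη,
    div_self (norm_ne_zero_iff.2 (ofReal_sub_ne_zero_of_norm_eq_one hη hr))]

theorem stmt_9 (η α : ℂ) (hη : ‖η‖ = 1)
    (hα : α = (Real.sqrt 5 * η - 1) / (Real.sqrt 5 - η)) :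
    let s : ℂ := Real.sqrt 5
    let U : Matrix (Fin 4) (Fin 4) ℂ :=
      (1 / 4 : ℂ) • !![-1, s, s, s;
                        s, -s * α, η * α, s * η;
                        s, 1, s * η, -s * η;
                        s, s * α, -s * α, 1]
    U * U.conjTranspose = 1 := by
  intro s U
  have hr : |Real.sqrt 5| ≠ 1 := by
    rw [abs_of_nonneg (Real.sqrt_nonneg _), Ne, Real.sqrt_eq_one]; norm_num
  have hs : star s = s := conj_ofReal _
  have hs5 : s ^ 2 = 5 := by rw [← ofReal_pow, Real.sq_sqrt (by norm_num)]; norm_num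
  have hηη : η * star η = 1 := by rw [star_def, mul_conj', hη]; norm_num
  have hαα : α * star α = 1 := by
    rw [star_def, mul_conj', hα, norm_ofReal_mul_sub_one_div_ofReal_sub hη hr]; norm_num
  have hαs : α * (s - η) = s * η - 1 := by
    rw [hα]; exact div_mul_cancel₀ _ (ofReal_sub_ne_zero_of_norm_eq_one hη hr)
  change ((1 / 4 : ℂ) • etaMatrix s η α) * ((1 / 4 : ℂ) • etaMatrix s η α).conjTranspose = 1
  rw [Matrix.conjTranspose_smul, Matrix.smul_mul, Matrix.mul_smul,
    etaMatrix_mul_conjTranspose hs hs5 hηη hαα hαs, smul_smul]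
  ext i j
  by_cases h : i = j <;> norm_num [h, Matrix.ofNat_apply, Matrix.one_apply]
end

section
/- PGL(2,4) is isomorphic to the alternating group A₅. -/
/-!
`PGL(2, F₄)` acts faithfully on the projective line `ℙ¹(F₄)`, which has `4 + 1 = 5` points, so it
embeds into `S₅`. It has order `|GL(2, F₄)| / |F₄ˣ| = 180 / 3 = 60`, so its image has index 2 in
`S₅`, and the only subgroup of index 2 in a symmetric group is the alternating group.
-/

open scoped MatrixGroups LinearAlgebra.Projectivization

namespace Projectivization

variable {ι K : Type*} [Fintype ι] [DecidableEq ι] [Field K]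

instance faithfulSMul_projGenLinGroup : FaithfulSMul PGL(ι, K) (ℙ K (ι → K)) := by
  refine faithfulSMul_iff.2 fun g hg ↦ ?_
  induction g using Matrix.ProjGenLinGroup.induction_on with | mk g =>
  rw [Matrix.ProjGenLinGroup.mk_eq_one,
    Matrix.GeneralLinearGroup.mem_center_iff_val_mem_range_scalar]
  -- `g` fixes every line, so every vector is an eigenvector of `g` and `g` is a homothety.
  obtain ⟨a, ha⟩ := (Matrix.toLin' g.val).exists_eq_smul_id_of_forall_notLinearIndependent
    fun v ↦ by
      by_cases hv : v = 0
      · simp [hv, linearIndependent_fin2]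
      · simpa [LinearIndependent.pair_iff' hv, mk_eq_mk_iff'] using! hg (.mk K v hv)
  exact ⟨a, by simpa [Matrix.smul_one_eq_diagonal] using (congrArg LinearMap.toMatrix' ha).symm⟩

end Projectivization

namespace Matrix.ProjGenLinGroup

theorem card_mul_card_units {n R : Type*} [Fintype n] [DecidableEq n] [Nonempty n] [CommRing R] :
    Nat.card PGL(n, R) * Nat.card Rˣ = Nat.card (GL n R) := by
  obtain ⟨i⟩ := ‹Nonempty n›
  have hscalar : Function.Injective (GeneralLinearGroup.scalar n : Rˣ →* GL n R) :=
    fun u v huv ↦ Units.ext <| by simpa using congrArg (fun g : GL n R ↦ g.val i i) huv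
  have hcenter : Nat.card (Subgroup.center (GL n R)) = Nat.card Rˣ := by
    rw [GeneralLinearGroup.center_eq_range_scalar]
    exact (Nat.card_congr (MonoidHom.ofInjective hscalar).toEquiv).symm
  rw [← hcenter]
  exact (Subgroup.card_eq_card_quotient_mul_card_subgroup _).symm

end Matrix.ProjGenLinGroup

theorem Equiv.Perm.nonempty_mulEquiv_alternatingGroup_of_injective {G α : Type*} [Group G]
    [Fintype α] [DecidableEq α] (f : G →* Perm α) (hf : Function.Injective f)
    (hG : 2 * Nat.card G = Nat.card (Perm α)) : Nonempty (G ≃* alternatingGroup α) := by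
  have hcard : Nat.card f.range = Nat.card G :=
    (Nat.card_congr (MonoidHom.ofInjective hf).toEquiv).symm
  have hindex : f.range.index = 2 := by
    have hpos : 0 < Nat.card G := by
      have := Nat.card_pos (α := Perm α)
      omega
    have := f.range.index_mul_card
    rw [hcard, ← hG] at this
    exact Nat.eq_of_mul_eq_mul_right hpos this
  exact ⟨(MonoidHom.ofInjective hf).trans
    (MulEquiv.subgroupCongr (eq_alternatingGroup_of_index_eq_two hindex))⟩

/-- `PGL(2,4)`, i.e. `GL(2,F₄)` modulo its center, is isomorphic to `A₅`. -/
theorem stmt_14 :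
    Nonempty ((GL (Fin 2) (GaloisField 2 2) ⧸
        Subgroup.center (GL (Fin 2) (GaloisField 2 2))) ≃*
      alternatingGroup (Fin 5)) := by
  let F := GaloisField 2 2
  show Nonempty (PGL(2, F) ≃* alternatingGroup (Fin 5))
  have hF : Nat.card F = 4 := GaloisField.card 2 2 two_ne_zero
  have hline : Nat.card (ℙ F (Fin 2 → F)) = 5 := by
    rw [Projectivization.card_of_finrank_two F _ (Module.finrank_fin_fun F), hF]
  let e := Finite.equivFinOfCardEq hline
  have hPGL : Nat.card PGL(2, F) = 60 := by
    let _ : Fintype F := Fintype.ofFinite F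
    have := Matrix.ProjGenLinGroup.card_mul_card_units (n := Fin 2) (R := F)
    rw [Nat.card_units, Matrix.card_GL_field, ← Nat.card_eq_fintype_card, hF] at this
    norm_num [Fin.prod_univ_two] at this
    omega
  exact Equiv.Perm.nonempty_mulEquiv_alternatingGroup_of_injective
    (e.permCongrHom.toMonoidHom.comp (MulAction.toPermHom PGL(2, F) (ℙ F (Fin 2 → F))))
    (e.permCongrHom.injective.comp MulAction.toPerm_injective)
    (by rw [hPGL, Nat.card_perm, Nat.card_fin]; rfl)
end
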